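/- Let S ⊆ ℝ^m be a nonempty compact convex set, A a real n×m matrix, ρ > 0, and v ∈ ℝ^n. Then the optimal value of the proximal subproblem satisfies min_{y ∈ ℝ^n} [ sup_{β ∈ S} (−⟨y, Aβ⟩) + (ρ/2)‖y − v‖² ] = (ρ/2)‖v‖² − (1/(2ρ)) · min_{β ∈ S} ‖Aβ + ρv‖². -/

import Mathlib

/-!
Completing the square gives, for every `c`,
`-⟪y, c⟫ + ρ/2 ‖y - v‖² = ρ/2 ‖y - (v + ρ⁻¹ c)‖² + ρ/2 ‖v‖² - ‖c + ρ v‖² / (2ρ)`,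
so the objective is bounded below by `ρ/2 ‖v‖² - ‖w + ρ v‖² / (2ρ)` for any `w ∈ A S`.
Taking `w` the point of the convex set `A S` nearest to `-ρ v`, the variational inequality
of the projection says that `c ↦ -⟪v + ρ⁻¹ w, c⟫` is maximal on `A S` at `c = w`, so the bound
is attained at `y = v + ρ⁻¹ w`.
-/

open Set

section ProxValue

variable {E : Type*} [NormedAddCommGroup E] [InnerProductSpace ℝ E]

theorem IsMinOn.real_inner_sub_sub_nonpos {K : Set E} (hK : Convex ℝ K) {u w : E}
    (hw : w ∈ K) (hmin : IsMinOn (fun c => ‖u - c‖) K w) :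
    ∀ c ∈ K, inner ℝ (u - w) (c - w) ≤ 0 :=
  (norm_eq_iInf_iff_real_inner_le_zero hK hw).1 (hmin.iInf_eq hw).symm

theorem neg_inner_add_half_mul_norm_sub_sq {ρ : ℝ} (hρ : ρ ≠ 0) (y v c : E) :
    -inner ℝ y c + ρ / 2 * ‖y - v‖ ^ 2
      = ρ / 2 * ‖y - (v + ρ⁻¹ • c)‖ ^ 2 + (ρ / 2 * ‖v‖ ^ 2 - 1 / (2 * ρ) * ‖c + ρ • v‖ ^ 2) := by
  rw [show y - (v + ρ⁻¹ • c) = (y - v) - ρ⁻¹ • c by abel, norm_sub_sq_real (y - v),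
    norm_add_sq_real, real_inner_smul_right, real_inner_smul_right, norm_smul, norm_smul,
    mul_pow, mul_pow, Real.norm_eq_abs, Real.norm_eq_abs, sq_abs, sq_abs, inner_sub_left,
    real_inner_comm c v]
  field_simp
  ring

theorem half_mul_norm_sq_sub_le_neg_inner_add {ρ : ℝ} (hρ : 0 < ρ) (y v c : E) :
    ρ / 2 * ‖v‖ ^ 2 - 1 / (2 * ρ) * ‖c + ρ • v‖ ^ 2 ≤ -inner ℝ y c + ρ / 2 * ‖y - v‖ ^ 2 := by
  rw [neg_inner_add_half_mul_norm_sub_sq hρ.ne']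
  have : 0 ≤ ρ / 2 * ‖y - (v + ρ⁻¹ • c)‖ ^ 2 := by positivity
  linarith

theorem IsMinOn.isMaxOn_neg_inner_add_inv_smul {K : Set E} (hK : Convex ℝ K) {ρ : ℝ}
    (hρ : 0 < ρ) {v w : E} (hw : w ∈ K) (hmin : IsMinOn (fun c => ‖c + ρ • v‖) K w) :
    IsMaxOn (fun c => -inner ℝ (v + ρ⁻¹ • w) c) K w := by
  have hproj : IsMinOn (fun c => ‖-(ρ • v) - c‖) K w := by
    simpa only [← norm_neg (-(ρ • v) - _), neg_sub, sub_neg_eq_add] using hmin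
  intro c hc
  have := hproj.real_inner_sub_sub_nonpos hK hw c hc
  rw [show -(ρ • v) - w = -ρ • (v + ρ⁻¹ • w) by simp [smul_add, hρ.ne']; abel,
    real_inner_smul_left, inner_sub_right] at this
  show -inner ℝ _ c ≤ -inner ℝ _ w
  exact neg_le_neg (by nlinarith)

theorem iInf_sSup_neg_inner_add_half_mul_norm_sub_sq {K : Set E} (hK : IsCompact K)
    (hKcv : Convex ℝ K) {ρ : ℝ} (hρ : 0 < ρ) {v w : E} (hw : w ∈ K)
    (hmin : IsMinOn (fun c => ‖c + ρ • v‖) K w) :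
    ⨅ y : E, (sSup ((fun c => -inner ℝ y c) '' K) + ρ / 2 * ‖y - v‖ ^ 2)
      = ρ / 2 * ‖v‖ ^ 2 - 1 / (2 * ρ) * ‖w + ρ • v‖ ^ 2 := by
  have hle : ∀ y : E, ρ / 2 * ‖v‖ ^ 2 - 1 / (2 * ρ) * ‖w + ρ • v‖ ^ 2
      ≤ sSup ((fun c => -inner ℝ y c) '' K) + ρ / 2 * ‖y - v‖ ^ 2 := fun y => by
    have hbdd : BddAbove ((fun c => -inner ℝ y c) '' K) :=
      (hK.image (continuous_const.inner continuous_id).neg).bddAbove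
    have := le_csSup hbdd (mem_image_of_mem _ hw)
    linarith [half_mul_norm_sq_sub_le_neg_inner_add hρ y v w]
  have hsup : sSup ((fun c => -inner ℝ (v + ρ⁻¹ • w) c) '' K) = -inner ℝ (v + ρ⁻¹ • w) w :=
    IsGreatest.csSup_eq ⟨mem_image_of_mem _ hw,
      forall_mem_image.2 fun _ hc => hmin.isMaxOn_neg_inner_add_inv_smul hKcv hρ hw hc⟩
  refine le_antisymm ?_ (le_ciInf hle)
  refine (ciInf_le ⟨_, forall_mem_range.2 hle⟩ (v + ρ⁻¹ • w)).trans_eq ?_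
  rw [hsup, neg_inner_add_half_mul_norm_sub_sq hρ.ne', sub_self, norm_zero]
  ring

end ProxValue

/-- The optimal value of the proximal subproblem satisfies
`min_y [sup_{β ∈ S}(−⟨y, Aβ⟩) + (ρ/2)‖y − v‖²] = (ρ/2)‖v‖² − (1/(2ρ)) min_{β ∈ S} ‖Aβ + ρv‖²`
for `S ⊆ ℝ^m` nonempty compact convex, `A` an `n×m` real matrix, `ρ > 0`, `v ∈ ℝ^n`. -/
theorem prox_subproblem_optimal_value (n m : ℕ) (S : Set (EuclideanSpace ℝ (Fin m)))
    (hSne : S.Nonempty) (hScp : IsCompact S) (hScv : Convex ℝ S)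
    (A : Matrix (Fin n) (Fin m) ℝ) (ρ : ℝ) (hρ : 0 < ρ)
    (v : EuclideanSpace ℝ (Fin n)) :
    (⨅ y : EuclideanSpace ℝ (Fin n),
        (sSup ((fun β => -(inner ℝ y (Matrix.toEuclideanLin A β) : ℝ)) '' S)
          + ρ / 2 * ‖y - v‖ ^ 2))
      = ρ / 2 * ‖v‖ ^ 2
        - 1 / (2 * ρ) * ⨅ β : S,
            ‖Matrix.toEuclideanLin A (β : EuclideanSpace ℝ (Fin m)) + ρ • v‖ ^ 2 := by
  set T := Matrix.toEuclideanLin A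
  have hT : Continuous T := T.continuous_of_finiteDimensional
  obtain ⟨β₀, hβ₀, hmin⟩ := hScp.exists_isMinOn hSne
    (hT.add continuous_const).norm.continuousOn
  have hminK : IsMinOn (fun c => ‖c + ρ • v‖) (T '' S) (T β₀) := by
    rintro _ ⟨β, hβ, rfl⟩
    exact hmin hβ
  have hminSq : IsMinOn (fun β => ‖T β + ρ • v‖ ^ 2) S β₀ := fun β hβ =>
    pow_le_pow_left₀ (norm_nonneg _) (hmin hβ) 2
  have himage : ∀ y, (fun β => -inner ℝ y (T β)) '' S = (fun c => -inner ℝ y c) '' (T '' S) :=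
    fun y => by rw [image_image]
  simp_rw [himage]
  rw [iInf_sSup_neg_inner_add_half_mul_norm_sub_sq (hScp.image hT) (hScv.linear_image T) hρ
    (mem_image_of_mem T hβ₀) hminK, hminSq.iInf_eq hβ₀]
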